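/- Let G be a 3-connected graph with at least four edges, spanning tree T, and non-empty Y ⊆ E(G)∖T. Then G has at most two Y-splittable vertices, and if it has exactly two they must be adjacent. -/

import Mathlib

/-- A multigraph on vertex type `V` with edge type `E`: each edge has an
unordered pair of endpoints. -/
structure Multigraph (V E : Type) where
  ends : E → Sym2 V

namespace Multigraph

variable {V E : Type}

/-- Adjacency within the subgraph with edge set `F` and vertex set `S`. -/
def Adj (G : Multigraph V E) (F : Set E) (S : Set V) (a b : V) : Prop :=
  a ∈ S ∧ b ∈ S ∧ ∃ e ∈ F, G.ends e = s(a, b)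

/-- Reachability (lying in the same connected component) in the subgraph with
edge set `F` and vertex set `S`. -/
def Reach (G : Multigraph V E) (F : Set E) (S : Set V) : V → V → Prop :=
  Relation.ReflTransGen (G.Adj F S)

/-- `v` is `Y`-splittable: the auxiliary graph `H^v_Y`, whose vertices are the
connected components of `G` minus the edges `Y` and the vertex `v`, with edges
induced by `Y`-edges between components (loops for `Y`-edges within a
component), is bipartite.  This is expressed by a 2-colouring of the vertices
which is constant on the components of `G^v_Y` and proper on `Y`-edges not
incident to `v`. -/
def Splittable (G : Multigraph V E) (Y : Set E) (v : V) : Prop :=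
  ∃ c : V → Bool,
    (∀ a b : V, G.Reach (Set.univ \ Y) {v}ᶜ a b → c a = c b) ∧
    (∀ y ∈ Y, ∀ a b : V, G.ends y = s(a, b) → a ≠ v → b ≠ v → c a ≠ c b)

/-- `T` is a spanning tree of `G`: the subgraph `(V, T)` is connected and
every edge of `T` is a bridge of it. -/
def IsSpanningTree (G : Multigraph V E) (T : Set E) : Prop :=
  (∀ a b : V, G.Reach T Set.univ a b) ∧
  ∀ f ∈ T, ∃ a b : V, ¬ G.Reach (T \ {f}) Set.univ a b

/-- The set of tree edges lying on the tree path `P_{u,w}(T)` between `u` and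
`w`: a tree edge lies on this path iff deleting it separates `u` from `w`. -/
def pathEdges (G : Multigraph V E) (T : Set E) (u w : V) : Set E :=
  {f | f ∈ T ∧ ¬ G.Reach (T \ {f}) Set.univ u w}

/-- The fundamental path `P_e(T)` of an edge `e` (as a set of tree edges). -/
def fundPath (G : Multigraph V E) (T : Set E) (e : E) : Set E :=
  {f | f ∈ T ∧ ∀ a b : V, G.ends e = s(a, b) → ¬ G.Reach (T \ {f}) Set.univ a b}

/-- `v` lies on the tree path between `u` and `w`. -/
def OnPath (G : Multigraph V E) (T : Set E) (u w v : V) : Prop :=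
  v = u ∨ v = w ∨ ¬ G.Reach T {v}ᶜ u w

/-- `v` lies on the fundamental path `P_e(T)` of the edge `e`. -/
def OnFundPath (G : Multigraph V E) (T : Set E) (e : E) (v : V) : Prop :=
  ∀ a b : V, G.ends e = s(a, b) → G.OnPath T a b v

/-- The vertices covered by an edge set `F`. -/
def verts (G : Multigraph V E) (F : Set E) : Set V :=
  {v | ∃ e ∈ F, v ∈ G.ends e}

/-- `P⁻¹_{u,w}(G,T)`: the non-tree edges whose fundamental path contains the
tree path from `u` to `w`. -/
def Pinv (G : Multigraph V E) (T : Set E) (u w : V) : Set E :=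
  {e | e ∉ T ∧ G.pathEdges T u w ⊆ G.fundPath T e}

/-- A multigraph is simple if it has no loops and no parallel edges. -/
def Simple (G : Multigraph V E) : Prop :=
  (∀ e : E, ¬ (G.ends e).IsDiag) ∧ ∀ e f : E, G.ends e = G.ends f → e = f

/-- A `k`-separation: a partition of the edges into two parts, each of size at
least `k`, whose vertex sets share exactly `k` vertices. -/
def IsSep (G : Multigraph V E) (k : ℕ) (E1 E2 : Set E) : Prop :=
  E1 ∪ E2 = Set.univ ∧ Disjoint E1 E2 ∧ k ≤ E1.ncard ∧ k ≤ E2.ncard ∧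
    (G.verts E1 ∩ G.verts E2).ncard = k

/-- Tutte `k`-connectivity: connected and without `ℓ`-separations for
`1 ≤ ℓ < k`. -/
def TutteConnected (G : Multigraph V E) (k : ℕ) : Prop :=
  (∀ a b : V, G.Reach Set.univ Set.univ a b) ∧
  ∀ l : ℕ, 1 ≤ l → l < k → ¬ ∃ E1 E2 : Set E, G.IsSep l E1 E2

/-- A 2-separation with designated separating vertices `u` and `w`. -/
def IsTwoSep (G : Multigraph V E) (E1 E2 : Set E) (u w : V) : Prop :=
  E1 ∪ E2 = Set.univ ∧ Disjoint E1 E2 ∧ 2 ≤ E1.ncard ∧ 2 ≤ E2.ncard ∧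
    u ≠ w ∧ G.verts E1 ∩ G.verts E2 = {u, w}

/-- `v` is an articulation vertex of the subgraph with edge set `F`: after
removing `v` (and its incident edges), some two remaining vertices are
disconnected. -/
def ArticulationVertex (G : Multigraph V E) (F : Set E) (v : V) : Prop :=
  ∃ a b : V, a ≠ v ∧ b ≠ v ∧ ¬ G.Reach F {v}ᶜ a b

/-- The subgraph on the edge set `E1`, augmented by one new edge `{u, w}`. -/
def augment (G : Multigraph V E) (E1 : Set E) (u w : V) :
    Multigraph V (↥E1 ⊕ Unit) :=
  ⟨Sum.elim (fun e => G.ends e.1) (fun _ => s(u, w))⟩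

/-- The edge set `Q` of the intersection of the fundamental paths of all
edges in `Y`. -/
def Qedges (G : Multigraph V E) (T Y : Set E) : Set E :=
  ⋂ y ∈ Y, G.fundPath T y

end Multigraph


namespace Multigraph

variable {V E : Type}

private lemma sym2_exists (s : Sym2 V) : ∃ α β, s = s(α, β) := by
  induction s using Sym2.ind with
  | _ x y => exact ⟨x, y, rfl⟩

private lemma ends_pair {s : Sym2 V} {α β w x : V} (hs : s = s(α, β))
    (hw : w ∈ s) (hx : x ∈ s) (hne : w ≠ x) : s = s(w, x) := by
  subst hs
  rw [Sym2.mem_iff] at hw hx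
  rcases hw with rfl | rfl <;> rcases hx with rfl | rfl <;>
    first | rfl | exact Sym2.eq_swap | exact absurd rfl hne

private lemma reach_single (G : Multigraph V E) {F : Set E} {S : Set V} {x z : V} {e : E}
    (he : e ∈ F) (hx : x ∈ S) (hz : z ∈ S) (hends : G.ends e = s(x, z)) :
    G.Reach F S x z :=
  Relation.ReflTransGen.single ⟨hx, hz, e, he, hends⟩

private lemma reach_mono (G : Multigraph V E) {F F' : Set E} {S S' : Set V}
    (hF : F ⊆ F') (hS : S ⊆ S') {a b : V} (h : G.Reach F S a b) :
    G.Reach F' S' a b :=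
  Relation.ReflTransGen.mono (r := G.Adj F S) (p := G.Adj F' S') (fun x y hxy =>
    ⟨hS hxy.1, hS hxy.2.1, hxy.2.2.choose, hF hxy.2.2.choose_spec.1, hxy.2.2.choose_spec.2⟩) a b h

end Multigraph

namespace Multigraph

variable {V E : Type}

private lemma two_conn_reach (G : Multigraph V E) [Fintype V] [Fintype E]
    (h3 : G.TutteConnected 3) (u v : V) {a b : V}
    (ha : a ∉ ({u, v} : Set V)) (hb : b ∉ ({u, v} : Set V)) :
    G.Reach Set.univ ({u, v} : Set V)ᶜ a b := by
  by_contra hN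
  have hab : a ≠ b := fun h => hN (h ▸ Relation.ReflTransGen.refl)
  set A : Set V := {x | x ∈ ({u, v} : Set V)ᶜ ∧ G.Reach Set.univ ({u, v} : Set V)ᶜ a x} with hA
  set E1 : Set E := {e | ∃ x ∈ A, x ∈ G.ends e} with hE1
  have hcl : ∀ e ∈ E1, ∀ x, x ∈ G.ends e → x ∈ A ∪ ({u, v} : Set V) := by
    rintro e ⟨w, hwA, hwe⟩ x hxe
    by_cases hxuv : x ∈ ({u, v} : Set V)
    · exact Or.inr hxuv
    · left
      rcases eq_or_ne w x with rfl | hwx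
      · exact hwA
      · obtain ⟨α, β, hαβ⟩ := sym2_exists (G.ends e)
        have hewx : G.ends e = s(w, x) := ends_pair hαβ hwe hxe hwx
        exact ⟨hxuv, hwA.2.trans
          (G.reach_single (Set.mem_univ e) hwA.1 hxuv hewx)⟩
  have haA : a ∈ A := ⟨ha, Relation.ReflTransGen.refl⟩
  have hbA : b ∉ A := fun h => hN h.2
  have hedge : ∀ x z : V, x ≠ z → G.Reach Set.univ Set.univ x z → ∃ e, x ∈ G.ends e := by
    intro x z hxz h
    rcases Relation.ReflTransGen.cases_head h with rfl | ⟨c, ⟨_, _, e, _, he⟩, _⟩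
    · exact absurd rfl hxz
    · exact ⟨e, he ▸ Sym2.mem_mk_left x c⟩
  obtain ⟨e₁, he₁⟩ := hedge a b hab (h3.1 a b)
  obtain ⟨e₂, he₂⟩ := hedge b a hab.symm (h3.1 b a)
  have he₁E1 : e₁ ∈ E1 := ⟨a, haA, he₁⟩
  have he₂E2 : e₂ ∉ E1 := by
    intro h
    rcases hcl e₂ h b he₂ with hbA' | hbuv
    · exact hbA hbA'
    · exact hb hbuv
  set I : Set V := G.verts E1 ∩ G.verts E1ᶜ with hI
  have hIuv : I ⊆ ({u, v} : Set V) := by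
    rintro x ⟨⟨e, heE1, hxe⟩, ⟨f, hfE2, hxf⟩⟩
    rcases hcl e heE1 x hxe with hxA | h
    · exact absurd ⟨x, hxA, hxf⟩ hfE2
    · exact h
  have hl2 : I.ncard ≤ 2 :=
    le_trans (Set.ncard_le_ncard hIuv (Set.toFinite _))
      ((Set.ncard_insert_le u {v}).trans (by simp))
  rcases Nat.eq_zero_or_pos I.ncard with hl0 | hlpos
  · have hIempty : I = ∅ := (Set.ncard_eq_zero (Set.toFinite _)).mp hl0
    have key : ∀ z, G.Reach Set.univ Set.univ a z → z ∉ G.verts E1ᶜ := by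
      intro z hz
      induction hz with
      | refl =>
        intro hav
        have : a ∈ I := ⟨⟨e₁, he₁E1, he₁⟩, hav⟩
        rw [hIempty] at this; exact this
      | tail hzz hadj ih =>
        rename_i zz zz'
        obtain ⟨_, _, e, _, hends⟩ := hadj
        intro hzv'
        have hzmem : zz ∈ G.ends e := hends ▸ Sym2.mem_mk_left zz zz'
        have heE1 : e ∈ E1 := by
          by_contra h
          exact ih ⟨e, h, hzmem⟩
        have : zz' ∈ I := ⟨⟨e, heE1, hends ▸ Sym2.mem_mk_right zz zz'⟩, hzv'⟩
        rw [hIempty] at this; exact this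
    exact key b (h3.1 a b) ⟨e₂, he₂E2, he₂⟩
  · have hbig : ∀ (X : Set E), (∃ x e', x ∉ ({u, v} : Set V) ∧ e' ∈ X ∧ x ∈ G.ends e') →
        I.ncard = 2 → I ⊆ G.verts X → 2 ≤ X.ncard := by
      rintro X ⟨x, e', hxuv, he'X, hxe'⟩ hl hIX
      by_contra hlt
      have hXne : X.Nonempty := ⟨e', he'X⟩
      have hX1 : X.ncard = 1 := by
        have := Set.ncard_pos (Set.toFinite X) |>.mpr hXne
        omega
      obtain ⟨e₀, he₀⟩ := Set.ncard_eq_one.mp hX1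
      have hIeq : I = {u, v} := Set.eq_of_subset_of_ncard_le hIuv
        (by rw [hl]; exact (Set.ncard_insert_le u {v}).trans (by simp)) (Set.toFinite _)
      have huvne : u ≠ v := by
        intro h
        rw [hIeq, h] at hl
        simp at hl
      have hmem : ∀ w ∈ G.verts X, w ∈ G.ends e₀ := by
        rintro w ⟨f, hfX, hwf⟩
        have : f = e₀ := by rw [he₀] at hfX; exact hfX
        exact this ▸ hwf
      have hu : u ∈ G.ends e₀ := hmem u (hIX (hIeq ▸ (by simp)))
      have hv : v ∈ G.ends e₀ := hmem v (hIX (hIeq ▸ (by simp)))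
      have hx : x ∈ G.ends e₀ := by
        have : e' = e₀ := by rw [he₀] at he'X; exact he'X
        exact this ▸ hxe'
      obtain ⟨α, β, hαβ⟩ := sym2_exists (G.ends e₀)
      rw [hαβ, Sym2.mem_iff] at hu hv hx
      simp only [Set.mem_insert_iff, Set.mem_singleton_iff, not_or] at hxuv
      rcases hu with h1 | h1 <;> rcases hv with h2 | h2 <;> rcases hx with h3 | h3 <;>
        first
        | exact huvne (h1.trans h2.symm)
        | exact hxuv.1 (h3.trans h1.symm)
        | exact hxuv.2 (h3.trans h2.symm)
    have hlE1 : I.ncard ≤ E1.ncard := by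
      rcases Nat.lt_or_ge I.ncard 2 with h2 | h2
      · have := Set.ncard_pos (Set.toFinite E1) |>.mpr ⟨e₁, he₁E1⟩
        omega
      · have hl : I.ncard = 2 := le_antisymm hl2 h2
        rw [hl]
        exact hbig E1 ⟨a, e₁, ha, he₁E1, he₁⟩ hl Set.inter_subset_left
    have hlE2 : I.ncard ≤ E1ᶜ.ncard := by
      rcases Nat.lt_or_ge I.ncard 2 with h2 | h2
      · have := Set.ncard_pos (Set.toFinite E1ᶜ) |>.mpr ⟨e₂, he₂E2⟩
        omega
      · have hl : I.ncard = 2 := le_antisymm hl2 h2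
        rw [hl]
        exact hbig E1ᶜ ⟨b, e₂, hb, he₂E2, he₂⟩ hl Set.inter_subset_right
    exact h3.2 I.ncard hlpos (by omega)
      ⟨E1, E1ᶜ, Set.union_compl_self E1, disjoint_compl_right, hlE1, hlE2, rfl⟩

end Multigraph

namespace Multigraph

variable {V E : Type}

private lemma no_loop (G : Multigraph V E) [Fintype V] [Fintype E]
    (h3 : G.TutteConnected 3) (hE : 2 ≤ Fintype.card E) :
    ∀ (e : E) (x z : V), G.ends e = s(x, z) → x ≠ z := by
  intro e x z hends hxz
  subst hxz
  obtain ⟨f, hf⟩ := Fintype.exists_ne_of_one_lt_card (by omega) e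
  set I : Set V := G.verts {e} ∩ G.verts {e}ᶜ with hI
  have hxv1 : x ∈ G.verts {e} := ⟨e, rfl, hends ▸ Sym2.mem_mk_left x x⟩
  have hIx : I ⊆ {x} := by
    rintro w ⟨⟨e', he', hwe'⟩, _⟩
    have he'e : e' = e := he'
    rw [he'e, hends, Sym2.mem_iff] at hwe'
    rcases hwe' with rfl | rfl <;> rfl
  have hl1 : I.ncard ≤ 1 :=
    le_trans (Set.ncard_le_ncard hIx (Set.toFinite _)) (by simp)
  rcases Nat.eq_zero_or_pos I.ncard with hl0 | hlpos
  · have hIempty : I = ∅ := (Set.ncard_eq_zero (Set.toFinite _)).mp hl0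
    have hxv2 : x ∉ G.verts {e}ᶜ := by
      intro h
      have : x ∈ I := ⟨hxv1, h⟩
      rw [hIempty] at this; exact this
    have key : ∀ w, G.Reach Set.univ Set.univ x w → w = x := by
      intro w hw
      induction hw with
      | refl => rfl
      | tail hzz hadj ih =>
        rename_i zz zz'
        obtain ⟨_, _, e', _, hends'⟩ := hadj
        rw [ih] at hends'
        have hxmem : x ∈ G.ends e' := hends' ▸ Sym2.mem_mk_left x zz'
        have he'e : e' = e := by
          by_contra h
          exact hxv2 ⟨e', h, hxmem⟩
        rw [he'e, hends] at hends'
        rw [Sym2.eq_iff] at hends'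
        rcases hends' with ⟨_, h⟩ | ⟨h, _⟩ <;> exact h.symm
    obtain ⟨α, β, hαβ⟩ := sym2_exists (G.ends f)
    have hαx : α ≠ x := by
      rintro rfl
      exact hxv2 ⟨f, hf, hαβ ▸ Sym2.mem_mk_left α β⟩
    exact hαx (key α (h3.1 x α))
  · refine h3.2 I.ncard hlpos (by omega) ⟨{e}, {e}ᶜ, Set.union_compl_self _,
      disjoint_compl_right, ?_, ?_, rfl⟩
    · simpa using hl1
    · have : ({e}ᶜ : Set E).Nonempty := ⟨f, hf⟩
      have := Set.ncard_pos (Set.toFinite ({e}ᶜ : Set E)) |>.mpr this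
      omega

private lemma no_parallel (G : Multigraph V E) [Fintype V] [Fintype E]
    (h3 : G.TutteConnected 3) (hE : 4 ≤ Fintype.card E)
    (hnl : ∀ (e : E) (x z : V), G.ends e = s(x, z) → x ≠ z) :
    ∀ e f : E, G.ends e = G.ends f → e = f := by
  intro e f hef
  by_contra hne
  obtain ⟨x, z, hends⟩ := sym2_exists (G.ends e)
  have hxz : x ≠ z := hnl e x z hends
  set E1 : Set E := {e, f} with hE1
  have hcard1 : E1.ncard = 2 := Set.ncard_pair hne
  have hcard2 : 2 ≤ (E1ᶜ).ncard := by
    have h := Set.ncard_add_ncard_compl E1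
    rw [Nat.card_eq_fintype_card] at h
    omega
  have hverts : ∀ w ∈ G.verts E1, w = x ∨ w = z := by
    rintro w ⟨e', he', hwe'⟩
    have : G.ends e' = s(x, z) := by
      rcases he' with rfl | rfl
      · exact hends
      · exact hef ▸ hends
    rw [this, Sym2.mem_iff] at hwe'
    exact hwe'
  set I : Set V := G.verts E1 ∩ G.verts E1ᶜ with hI
  have hIxz : I ⊆ {x, z} := fun w hw => hverts w hw.1
  have hl2 : I.ncard ≤ 2 :=
    le_trans (Set.ncard_le_ncard hIxz (Set.toFinite _))
      ((Set.ncard_insert_le x {z}).trans (by simp))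
  rcases Nat.eq_zero_or_pos I.ncard with hl0 | hlpos
  · have hIempty : I = ∅ := (Set.ncard_eq_zero (Set.toFinite _)).mp hl0
    have hv1 : x ∈ G.verts E1 := ⟨e, Or.inl rfl, hends ▸ Sym2.mem_mk_left x z⟩
    have hv2 : z ∈ G.verts E1 := ⟨e, Or.inl rfl, hends ▸ Sym2.mem_mk_right x z⟩
    have hnv : ∀ w, w = x ∨ w = z → w ∉ G.verts E1ᶜ := by
      rintro w hw hwc
      have : w ∈ I := ⟨by rcases hw with rfl | rfl <;> assumption, hwc⟩
      rw [hIempty] at this; exact this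
    have key : ∀ w, G.Reach Set.univ Set.univ x w → w = x ∨ w = z := by
      intro w hw
      induction hw with
      | refl => exact Or.inl rfl
      | tail hzz hadj ih =>
        rename_i zz zz'
        obtain ⟨_, _, e', _, hends'⟩ := hadj
        have hzmem : zz ∈ G.ends e' := hends' ▸ Sym2.mem_mk_left zz zz'
        have he'E1 : e' ∈ E1 := by
          by_contra h
          exact hnv zz ih ⟨e', h, hzmem⟩
        have : G.ends e' = s(x, z) := by
          rcases he'E1 with rfl | rfl
          · exact hends
          · exact hef ▸ hends
        have : zz' ∈ s(x, z) := this ▸ (hends' ▸ Sym2.mem_mk_right zz zz')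
        rw [Sym2.mem_iff] at this
        exact this
    obtain ⟨g, hg⟩ : (E1ᶜ : Set E).Nonempty := by
      rw [← Set.ncard_pos (Set.toFinite _)]; omega
    obtain ⟨α, β, hαβ⟩ := sym2_exists (G.ends g)
    have : α = x ∨ α = z := key α (h3.1 x α)
    exact hnv α this ⟨g, hg, hαβ ▸ Sym2.mem_mk_left α β⟩
  · exact h3.2 I.ncard hlpos (by omega) ⟨E1, E1ᶜ, Set.union_compl_self _,
      disjoint_compl_right, by omega, by omega, rfl⟩

end Multigraph

namespace Multigraph

variable {V E : Type}

private lemma bool_step {px pw pw' qx qw qw' : Bool} (ih : px = pw ↔ qx = qw)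
    (hp : pw ≠ pw') (hq : qw ≠ qw') : (px = pw' ↔ qx = qw') := by
  cases px <;> cases pw <;> cases pw' <;> cases qx <;> cases qw <;> cases qw' <;> simp_all

private lemma bool_trick {a b c d : Bool} (h : (a = b) ↔ (c = d)) (hbd : b = d) : a = c := by
  subst hbd
  cases a <;> cases c <;> cases b <;> simp_all

private lemma mem_compl_single {x y : V} (h : x ≠ y) : x ∈ ({y} : Set V)ᶜ :=
  Set.mem_compl_singleton_iff.mpr h

private lemma not_mem_pair {x a b : V} (h1 : x ≠ a) (h2 : x ≠ b) : x ∉ ({a, b} : Set V) := by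
  simp only [Set.mem_insert_iff, Set.mem_singleton_iff, not_or]
  exact ⟨h1, h2⟩


private lemma normalize (G : Multigraph V E) (Y : Set E) {v : V} {q0 : V → Bool}
    (p : V → Bool) (z₀ : V)
    (hq01 : ∀ a b : V, G.Reach (Set.univ \ Y) {v}ᶜ a b → q0 a = q0 b)
    (hq02 : ∀ y ∈ Y, ∀ a b : V, G.ends y = s(a, b) → a ≠ v → b ≠ v → q0 a ≠ q0 b) :
    ∃ q : V → Bool, (∀ a b : V, G.Reach (Set.univ \ Y) {v}ᶜ a b → q a = q b) ∧
      (∀ y ∈ Y, ∀ a b : V, G.ends y = s(a, b) → a ≠ v → b ≠ v → q a ≠ q b) ∧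
      q z₀ = p z₀ := by
  by_cases hc : q0 z₀ = p z₀
  · exact ⟨q0, hq01, hq02, hc⟩
  · refine ⟨fun x => !(q0 x), ?_, ?_, ?_⟩
    · intro a b h
      simp [hq01 a b h]
    · intro y hy a b he hav hbv
      simp [hq02 y hy a b he hav hbv]
    · cases h1 : q0 z₀ <;> cases h2 : p z₀ <;> simp_all

private lemma color_iff (G : Multigraph V E) [Fintype V] [Fintype E]
    (h3 : G.TutteConnected 3) (Y : Set E) {u v : V} {p q : V → Bool}
    (hp1 : ∀ a b : V, G.Reach (Set.univ \ Y) {u}ᶜ a b → p a = p b)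
    (hp2 : ∀ y ∈ Y, ∀ a b : V, G.ends y = s(a, b) → a ≠ u → b ≠ u → p a ≠ p b)
    (hq1 : ∀ a b : V, G.Reach (Set.univ \ Y) {v}ᶜ a b → q a = q b)
    (hq2 : ∀ y ∈ Y, ∀ a b : V, G.ends y = s(a, b) → a ≠ v → b ≠ v → q a ≠ q b)
    {x z : V} (hx : x ∉ ({u, v} : Set V)) (hz : z ∉ ({u, v} : Set V)) :
    (p x = p z ↔ q x = q z) := by
  have key : ∀ t : V, G.Reach Set.univ ({u, v} : Set V)ᶜ x t → (p x = p t ↔ q x = q t) := by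
    intro t ht
    induction ht with
    | refl => simp
    | tail hr hadj ih =>
      rename_i ww ww'
      obtain ⟨hwS, hw'S, e, _, hends⟩ := hadj
      simp only [Set.mem_compl_iff, Set.mem_insert_iff, Set.mem_singleton_iff, not_or]
        at hwS hw'S
      by_cases heY : e ∈ Y
      · have hpe : p ww ≠ p ww' := hp2 e heY ww ww' hends hwS.1 hw'S.1
        have hqe : q ww ≠ q ww' := hq2 e heY ww ww' hends hwS.2 hw'S.2
        exact bool_step ih hpe hqe
      · have hpe : p ww = p ww' := hp1 ww ww' (G.reach_single ⟨Set.mem_univ e, heY⟩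
          (mem_compl_single hwS.1) (mem_compl_single hw'S.1) hends)
        have hqe : q ww = q ww' := hq1 ww ww' (G.reach_single ⟨Set.mem_univ e, heY⟩
          (mem_compl_single hwS.2) (mem_compl_single hw'S.2) hends)
        rw [← hpe, ← hqe]
        exact ih
  exact key z (G.two_conn_reach h3 u v hx hz)

end Multigraph

namespace Multigraph

variable {V E : Type}

private lemma pair_adjacent (G : Multigraph V E) [Fintype V] [Fintype E]
    (h3 : G.TutteConnected 3) (T : Set E) (hT : G.IsSpanningTree T)
    (Y : Set E) (hYT : ∀ y ∈ Y, y ∉ T) {y₀ : E} (hy₀ : y₀ ∈ Y)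
    {u v : V} (hu : G.Splittable Y u) (hv : G.Splittable Y v) (huv : u ≠ v) :
    ∃ e : E, G.ends e = s(u, v) := by
  classical
  by_contra hno
  push_neg at hno
  obtain ⟨p, hp1, hp2⟩ := hu
  obtain ⟨q0, hq01, hq02⟩ := hv
  obtain ⟨a, b, hab⟩ := sym2_exists (G.ends y₀)
  by_cases hex : ∃ z, z ∉ ({u, v} : Set V)
  case neg =>
    push_neg at hex
    have ham := hex a
    have hbm := hex b
    simp only [Set.mem_insert_iff, Set.mem_singleton_iff] at ham hbm
    rcases eq_or_ne a b with rfl | hne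
    · rcases ham with h | h
      · exact hq02 y₀ hy₀ a a hab (by rw [h]; exact huv) (by rw [h]; exact huv) rfl
      · exact hp2 y₀ hy₀ a a hab (by rw [h]; exact huv.symm) (by rw [h]; exact huv.symm) rfl
    · rcases ham with h1 | h1 <;> rcases hbm with h2 | h2
      · exact hne (h1.trans h2.symm)
      · exact hno y₀ (by rw [hab, h1, h2])
      · exact hno y₀ (by rw [hab, h1, h2]; exact Sym2.eq_swap)
      · exact hne (h1.trans h2.symm)
  case pos =>
    obtain ⟨z₀, hz₀⟩ := hex
    obtain ⟨q, hq1, hq2, hqz₀⟩ := G.normalize Y p z₀ hq01 hq02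
    have hpq : ∀ x, x ∉ ({u, v} : Set V) → p x = q x := by
      intro x hx
      exact bool_trick (G.color_iff h3 Y hp1 hp2 hq1 hq2 hx hz₀) hqz₀.symm
    set φ : V → Bool := fun x => if x = u then q u else p x with hφdef
    have hstep : ∀ x z : V, G.Adj (Set.univ \ Y) Set.univ x z → φ x = φ z := by
      intro x z hadj
      obtain ⟨-, -, e, heF, hends⟩ := hadj
      have heY : e ∉ Y := heF.2
      by_cases hxu : x = u <;> by_cases hzu : z = u
      · rw [hφdef]; simp [hxu, hzu]
      · subst hxu
        by_cases hzv : z = v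
        · subst hzv; exact absurd hends (hno e)
        · have hq : q x = q z := hq1 x z (G.reach_single ⟨Set.mem_univ e, heY⟩
            (mem_compl_single huv) (mem_compl_single hzv) hends)
          have hz2 : p z = q z := hpq z (not_mem_pair hzu hzv)
          rw [hφdef]; simp only [if_pos rfl, if_neg hzu]
          exact hq.trans hz2.symm
      · subst hzu
        by_cases hxv : x = v
        · subst hxv; exact absurd (hends.trans Sym2.eq_swap) (hno e)
        · have hq : q x = q z := hq1 x z (G.reach_single ⟨Set.mem_univ e, heY⟩
            (mem_compl_single hxv) (mem_compl_single huv) hends)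
          have hx2 : p x = q x := hpq x (not_mem_pair hxu hxv)
          rw [hφdef]; simp only [if_neg hxu, if_pos rfl]
          exact hx2.trans hq
      · have hp : p x = p z := hp1 x z (G.reach_single ⟨Set.mem_univ e, heY⟩
          (mem_compl_single hxu) (mem_compl_single hzu) hends)
        rw [hφdef]; simp only [if_neg hxu, if_neg hzu]
        exact hp
    have hwalk : ∀ x z : V, G.Reach (Set.univ \ Y) Set.univ x z → φ x = φ z := by
      intro x z h
      induction h with
      | refl => rfl
      | tail _ hadj ih => exact ih.trans (hstep _ _ hadj)
    have hTsub : T ⊆ Set.univ \ Y := fun f hf => ⟨Set.mem_univ f, fun hfY => hYT f hfY hf⟩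
    have hglobal : φ a = φ b := hwalk a b (G.reach_mono hTsub (le_refl _) (hT.1 a b))
    by_cases hau : a = u <;> by_cases hbu : b = u
    · exact hq2 y₀ hy₀ a b hab (by rw [hau]; exact huv) (by rw [hbu]; exact huv)
        (by rw [hau, hbu])
    · subst hau
      by_cases hbv : b = v
      · subst hbv; exact hno y₀ hab
      · refine hq2 y₀ hy₀ a b hab huv hbv ?_
        calc q a = φ a := by rw [hφdef]; simp
        _ = φ b := hglobal
        _ = p b := by rw [hφdef]; simp [hbu]
        _ = q b := hpq b (not_mem_pair hbu hbv)
    · subst hbu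
      by_cases hav : a = v
      · subst hav; exact hno y₀ (hab.trans Sym2.eq_swap)
      · refine hq2 y₀ hy₀ a b hab hav huv ?_
        calc q a = p a := (hpq a (not_mem_pair hau hav)).symm
        _ = φ a := by rw [hφdef]; simp [hau]
        _ = φ b := hglobal
        _ = q b := by rw [hφdef]; simp
    · refine hp2 y₀ hy₀ a b hab hau hbu ?_
      calc p a = φ a := by rw [hφdef]; simp [hau]
      _ = φ b := hglobal
      _ = p b := by rw [hφdef]; simp [hbu]

end Multigraph

namespace Multigraph

variable {V E : Type}

private lemma no_three (G : Multigraph V E) [Fintype V] [Fintype E]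
    (h3 : G.TutteConnected 3) (hE : 4 ≤ Fintype.card E)
    (T : Set E) (hT : G.IsSpanningTree T)
    (Y : Set E) (hYT : ∀ y ∈ Y, y ∉ T) {y₀ : E} (hy₀ : y₀ ∈ Y)
    {u v w : V} (hu : G.Splittable Y u) (hv : G.Splittable Y v) (hw : G.Splittable Y w)
    (huv : u ≠ v) (huw : u ≠ w) (hvw : v ≠ w) : False := by
  classical
  have hnl := G.no_loop h3 (by omega)
  have hnp := G.no_parallel h3 hE hnl
  obtain ⟨p, hp1, hp2⟩ := hu
  obtain ⟨q0, hq01, hq02⟩ := hv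
  obtain ⟨r0, hr01, hr02⟩ := hw
  obtain ⟨a, b, hab⟩ := sym2_exists (G.ends y₀)
  by_cases hex : ∃ z, z ∉ ({u, v, w} : Set V)
  case neg =>
    push_neg at hex
    have hd1 : s(u, v) ≠ s(u, w) := by
      intro hc
      rcases Sym2.eq_iff.mp hc with ⟨h1, h2⟩ | ⟨h1, h2⟩
      · exact hvw h2
      · exact huw h1
    have hd2 : s(u, v) ≠ s(v, w) := by
      intro hc
      rcases Sym2.eq_iff.mp hc with ⟨h1, h2⟩ | ⟨h1, h2⟩
      · exact huv h1
      · exact huw h1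
    have hd3 : s(u, w) ≠ s(v, w) := by
      intro hc
      rcases Sym2.eq_iff.mp hc with ⟨h1, h2⟩ | ⟨h1, h2⟩
      · exact huv h1
      · exact huw h1
    have hmap : ∀ e : E, G.ends e = s(u, v) ∨ G.ends e = s(u, w) ∨ G.ends e = s(v, w) := by
      intro e
      obtain ⟨α, β, h⟩ := sym2_exists (G.ends e)
      have hαβ : α ≠ β := hnl e α β h
      have hαm := hex α
      have hβm := hex β
      simp only [Set.mem_insert_iff, Set.mem_singleton_iff] at hαm hβm
      rcases hαm with h1 | h1 | h1 <;> rcases hβm with h2 | h2 | h2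
      · exact absurd (h1.trans h2.symm) hαβ
      · exact Or.inl (by rw [h, h1, h2])
      · exact Or.inr (Or.inl (by rw [h, h1, h2]))
      · exact Or.inl (by rw [h, h1, h2]; exact Sym2.eq_swap)
      · exact absurd (h1.trans h2.symm) hαβ
      · exact Or.inr (Or.inr (by rw [h, h1, h2]))
      · exact Or.inr (Or.inl (by rw [h, h1, h2]; exact Sym2.eq_swap))
      · exact Or.inr (Or.inr (by rw [h, h1, h2]; exact Sym2.eq_swap))
      · exact absurd (h1.trans h2.symm) hαβ
    set g : E → Fin 3 := fun e =>
      if G.ends e = s(u, v) then 0 else if G.ends e = s(u, w) then 1 else 2 with hgdef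
    have hval : ∀ e : E, (G.ends e = s(u, v) ∧ g e = 0) ∨ (G.ends e = s(u, w) ∧ g e = 1)
        ∨ (G.ends e = s(v, w) ∧ g e = 2) := by
      intro e
      rcases hmap e with he | he | he
      · exact Or.inl ⟨he, by rw [hgdef]; simp [he]⟩
      · exact Or.inr (Or.inl ⟨he, by rw [hgdef]; simp [he, hd1.symm]⟩)
      · exact Or.inr (Or.inr ⟨he, by rw [hgdef]; simp [he, hd2.symm, hd3.symm]⟩)
    have hginj : Function.Injective g := by
      intro e f hgef
      apply hnp
      rcases hval e with ⟨he, hge⟩ | ⟨he, hge⟩ | ⟨he, hge⟩ <;>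
        rcases hval f with ⟨hf, hgf⟩ | ⟨hf, hgf⟩ | ⟨hf, hgf⟩ <;>
        first
        | exact he.trans hf.symm
        | (exfalso; rw [hge, hgf] at hgef; exact absurd hgef (by decide))
    have := Fintype.card_le_of_injective g hginj
    rw [Fintype.card_fin] at this
    omega
  case pos =>
    obtain ⟨z₀, hz₀⟩ := hex
    simp only [Set.mem_insert_iff, Set.mem_singleton_iff, not_or] at hz₀
    obtain ⟨hz₀u, hz₀v, hz₀w⟩ := hz₀
    obtain ⟨q, hq1, hq2, hqz₀⟩ := G.normalize Y p z₀ hq01 hq02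
    obtain ⟨r, hr1, hr2, hrz₀⟩ := G.normalize Y p z₀ hr01 hr02
    have hpq : ∀ x, x ∉ ({u, v} : Set V) → p x = q x := by
      intro x hx
      exact bool_trick (G.color_iff h3 Y hp1 hp2 hq1 hq2 hx (not_mem_pair hz₀u hz₀v)) hqz₀.symm
    have hpr : ∀ x, x ∉ ({u, w} : Set V) → p x = r x := by
      intro x hx
      exact bool_trick (G.color_iff h3 Y hp1 hp2 hr1 hr2 hx (not_mem_pair hz₀u hz₀w)) hrz₀.symm
    have hqr : ∀ x, x ∉ ({v, w} : Set V) → q x = r x := by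
      intro x hx
      exact bool_trick (G.color_iff h3 Y hq1 hq2 hr1 hr2 hx (not_mem_pair hz₀v hz₀w))
        (hqz₀.trans hrz₀.symm)
    have hqu_ru : q u = r u := hqr u (not_mem_pair huv huw)
    have hpv_rv : p v = r v := hpr v (not_mem_pair (Ne.symm huv) hvw)
    set φ : V → Bool := fun x => if x = u then q u else p x with hφdef
    have hstep : ∀ x z : V, G.Adj (Set.univ \ Y) Set.univ x z → φ x = φ z := by
      intro x z hadj
      obtain ⟨-, -, e, heF, hends⟩ := hadj
      have heY : e ∉ Y := heF.2
      by_cases hxu : x = u <;> by_cases hzu : z = u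
      · rw [hφdef]; simp [hxu, hzu]
      · subst hxu
        rw [hφdef]; simp only [if_pos rfl, if_neg hzu]
        by_cases hzv : z = v
        · subst hzv
          have hr : r x = r z := hr1 x z (G.reach_single ⟨Set.mem_univ e, heY⟩
            (mem_compl_single huw) (mem_compl_single hvw) hends)
          exact hqu_ru.trans (hr.trans hpv_rv.symm)
        · have hq : q x = q z := hq1 x z (G.reach_single ⟨Set.mem_univ e, heY⟩
            (mem_compl_single huv) (mem_compl_single hzv) hends)
          exact hq.trans (hpq z (not_mem_pair hzu hzv)).symm
      · subst hzu
        rw [hφdef]; simp only [if_neg hxu, if_pos rfl]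
        by_cases hxv : x = v
        · subst hxv
          have hr : r x = r z := hr1 x z (G.reach_single ⟨Set.mem_univ e, heY⟩
            (mem_compl_single hvw) (mem_compl_single huw) hends)
          exact hpv_rv.trans (hr.trans hqu_ru.symm)
        · have hq : q x = q z := hq1 x z (G.reach_single ⟨Set.mem_univ e, heY⟩
            (mem_compl_single hxv) (mem_compl_single huv) hends)
          exact (hpq x (not_mem_pair hxu hxv)).trans hq
      · have hp : p x = p z := hp1 x z (G.reach_single ⟨Set.mem_univ e, heY⟩
          (mem_compl_single hxu) (mem_compl_single hzu) hends)
        rw [hφdef]; simp only [if_neg hxu, if_neg hzu]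
        exact hp
    have hwalk : ∀ x z : V, G.Reach (Set.univ \ Y) Set.univ x z → φ x = φ z := by
      intro x z h
      induction h with
      | refl => rfl
      | tail _ hadj ih => exact ih.trans (hstep _ _ hadj)
    have hTsub : T ⊆ Set.univ \ Y := fun f hf => ⟨Set.mem_univ f, fun hfY => hYT f hfY hf⟩
    have hglobal : φ a = φ b := hwalk a b (G.reach_mono hTsub (le_refl _) (hT.1 a b))
    have habne : a ≠ b := hnl y₀ a b hab
    by_cases hau : a = u <;> by_cases hbu : b = u
    · exact habne (hau.trans hbu.symm)
    · subst hau
      by_cases hbv : b = v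
      · subst hbv
        refine hr2 y₀ hy₀ a b hab huw hvw ?_
        calc r a = q a := hqu_ru.symm
        _ = φ a := by rw [hφdef]; simp
        _ = φ b := hglobal
        _ = p b := by rw [hφdef]; simp [hbu]
        _ = r b := hpv_rv
      · refine hq2 y₀ hy₀ a b hab huv hbv ?_
        calc q a = φ a := by rw [hφdef]; simp
        _ = φ b := hglobal
        _ = p b := by rw [hφdef]; simp [hbu]
        _ = q b := hpq b (not_mem_pair hbu hbv)
    · subst hbu
      by_cases hav : a = v
      · subst hav
        refine hr2 y₀ hy₀ a b hab hvw huw ?_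
        calc r a = p a := hpv_rv.symm
        _ = φ a := by rw [hφdef]; simp [hau]
        _ = φ b := hglobal
        _ = q b := by rw [hφdef]; simp
        _ = r b := hqu_ru
      · refine hq2 y₀ hy₀ a b hab hav huv ?_
        calc q a = p a := (hpq a (not_mem_pair hau hav)).symm
        _ = φ a := by rw [hφdef]; simp [hau]
        _ = φ b := hglobal
        _ = q b := by rw [hφdef]; simp
    · refine hp2 y₀ hy₀ a b hab hau hbu ?_
      calc p a = φ a := by rw [hφdef]; simp [hau]
      _ = φ b := hglobal
      _ = p b := by rw [hφdef]; simp [hbu]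

end Multigraph

/-- A 3-connected graph with at least four edges has at most two
`Y`-splittable vertices, and if it has two then they are adjacent. -/
theorem at_most_two_splittable {V E : Type} [Fintype V] [Fintype E]
    (G : Multigraph V E) (h3 : G.TutteConnected 3)
    (hE : 4 ≤ Fintype.card E)
    (T : Set E) (hT : G.IsSpanningTree T)
    (Y : Set E) (hYT : ∀ y ∈ Y, y ∉ T) (hYne : Y.Nonempty) :
    {v : V | G.Splittable Y v}.ncard ≤ 2 ∧
    ∀ v₁ v₂ : V, G.Splittable Y v₁ → G.Splittable Y v₂ → v₁ ≠ v₂ →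
      ∃ e : E, G.ends e = s(v₁, v₂) := by
  obtain ⟨y₀, hy₀⟩ := hYne
  constructor
  · by_contra hc
    push_neg at hc
    obtain ⟨u, hu, v, hv, w, hw, huv, huw, hvw⟩ :=
      (Set.two_lt_ncard (Set.toFinite _)).mp hc
    exact G.no_three h3 hE T hT Y hYT hy₀ hu hv hw huv huw hvw
  · intro v₁ v₂ h1 h2 hne
    exact G.pair_adjacent h3 T hT Y hYT hy₀ h1 h2 hne
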